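/- arXiv:0803.4251 — 3 statements merged into one kernel-verified Lean document; each statement's English description precedes it below -/
import Mathlib

section
/- Let X be a compact metric space and G a partition of X into compact subsets such that only countably many elements of G are non-singletons, and these non-degenerate elements form a null-sequence (for every ε > 0, only finitely many have diameter ≥ ε). Then the quotient map π : X → X/G is a closed map (i.e. the decomposition is upper semicontinuous). -/
theorem quotient_map_closed_of_null_sequence_decomposition
    {X : Type*} [MetricSpace X] [CompactSpace X] (s : Setoid X)
    (hcompact : ∀ x : X, IsCompact {y : X | s.r x y})
    (hcount : {C : Set X | (∃ x : X, C = {y : X | s.r x y}) ∧ ¬ C.Subsingleton}.Countable)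
    (hnull : ∀ ε : ℝ, 0 < ε →
      {C : Set X | (∃ x : X, C = {y : X | s.r x y}) ∧ ¬ C.Subsingleton ∧
        ε ≤ Metric.diam C}.Finite) :
    IsClosedMap (Quotient.mk s) := by
  intro A hA
  rw [← isQuotientMap_quotient_mk'.isClosed_preimage]
  have hsat : Quotient.mk s ⁻¹' (Quotient.mk s '' A) = {y | ∃ x ∈ A, s.r x y} := by
    ext y
    simp only [Set.mem_preimage, Set.mem_image, Set.mem_setOf_eq]
    constructor
    · rintro ⟨x, hx, hxy⟩; exact ⟨x, hx, Quotient.exact hxy⟩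
    · rintro ⟨x, hx, hxy⟩; exact ⟨x, hx, Quotient.sound hxy⟩
  show IsClosed (Quotient.mk s ⁻¹' (Quotient.mk s '' A))
  rw [hsat]
  refine isClosed_of_closure_subset ?_
  intro y hy
  -- choose an approximating sequence from the saturation
  have hu : ∀ n : ℕ, ∃ u : X, (∃ x ∈ A, s.r x u) ∧ dist y u < 1 / (n + 1) := by
    intro n
    have := Metric.mem_closure_iff.mp hy (1 / (n + 1)) (by positivity)
    obtain ⟨u, hu1, hu2⟩ := this
    exact ⟨u, hu1, hu2⟩
  choose u hu1 hu2 using hu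
  choose x hxA hxu using hu1
  by_cases h : ∃ ε > (0 : ℝ), {n : ℕ | ε ≤ dist (x n) (u n)}.Infinite
  · -- infinitely many of the classes are "large": pigeonhole
    obtain ⟨ε, hε, hS⟩ := h
    set S := {n : ℕ | ε ≤ dist (x n) (u n)} with hSdef
    set F := {C : Set X | (∃ x : X, C = {y : X | s.r x y}) ∧ ¬ C.Subsingleton ∧
        ε ≤ Metric.diam C} with hFdef
    have hF : F.Finite := hnull ε hε
    have hmem : ∀ n ∈ S, {z : X | s.r (x n) z} ∈ F := by
      intro n hn
      have hdist : ε ≤ dist (x n) (u n) := hn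
      have hxn : x n ∈ {z : X | s.r (x n) z} := s.iseqv.refl (x n)
      have hun : u n ∈ {z : X | s.r (x n) z} := hxu n
      refine ⟨⟨x n, rfl⟩, ?_, ?_⟩
      · intro hsub
        have := hsub hxn hun
        rw [this] at hdist
        simp at hdist
        linarith
      · calc ε ≤ dist (x n) (u n) := hdist
          _ ≤ Metric.diam {z : X | s.r (x n) z} :=
            Metric.dist_le_diam_of_mem (hcompact (x n)).isBounded hxn hun
    have hpig : ∃ C ∈ F, {n : ℕ | n ∈ S ∧ {z : X | s.r (x n) z} = C}.Infinite := by
      by_contra hcon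
      push_neg at hcon
      have hfin : S.Finite := by
        have hsub : S ⊆ ⋃ C ∈ F, {n : ℕ | n ∈ S ∧ {z : X | s.r (x n) z} = C} := by
          intro n hn
          exact Set.mem_biUnion (hmem n hn) ⟨hn, rfl⟩
        exact Set.Finite.subset
          (Set.Finite.biUnion hF fun C hC => (hcon C hC)) hsub
      exact hS hfin
    obtain ⟨C, hCF, hT⟩ := hpig
    set T := {n : ℕ | n ∈ S ∧ {z : X | s.r (x n) z} = C} with hTdef
    obtain ⟨m, hm⟩ := hT.nonempty
    have hCclosed : IsClosed C := by
      rw [← hm.2]; exact (hcompact (x m)).isClosed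
    have hyC : y ∈ C := by
      rw [← hCclosed.closure_eq]
      rw [Metric.mem_closure_iff]
      intro δ hδ
      obtain ⟨N, hN⟩ := exists_nat_one_div_lt hδ
      obtain ⟨n, hnT, hnN⟩ := hT.exists_gt N
      refine ⟨u n, ?_, ?_⟩
      · rw [← hnT.2]; exact hxu n
      · calc dist y (u n) < 1 / (n + 1) := hu2 n
          _ ≤ 1 / (N + 1) := by
            apply one_div_le_one_div_of_le (by positivity)
            have : (N : ℝ) ≤ n := by exact_mod_cast hnN.le
            linarith
          _ < δ := hN
    have : s.r (x m) y := by
      have : y ∈ {z : X | s.r (x m) z} := by rw [hm.2]; exact hyC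
      exact this
    exact ⟨x m, hxA m, this⟩
  · -- the classes shrink: y is a limit of points of A
    push_neg at h
    have hyA : y ∈ A := by
      rw [← hA.closure_eq]
      rw [Metric.mem_closure_iff]
      intro δ hδ
      have hinf : {n : ℕ | dist (x n) (u n) < δ / 2}.Infinite := by
        have hfin : {n : ℕ | δ / 2 ≤ dist (x n) (u n)}.Finite :=
          h (δ / 2) (by positivity)
        have : {n : ℕ | δ / 2 ≤ dist (x n) (u n)}ᶜ = {n : ℕ | dist (x n) (u n) < δ / 2} := by
          ext n; simp [not_le]
        rw [← this]
        exact hfin.infinite_compl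
      obtain ⟨N, hN⟩ := exists_nat_one_div_lt (show (0:ℝ) < δ / 2 by positivity)
      obtain ⟨n, hn, hnN⟩ := hinf.exists_gt N
      refine ⟨x n, hxA n, ?_⟩
      calc dist y (x n) ≤ dist y (u n) + dist (u n) (x n) := dist_triangle _ _ _
        _ < 1 / (n + 1) + δ / 2 := by
            have h1 : dist (u n) (x n) < δ / 2 := by rw [dist_comm]; exact hn
            have h2 : dist y (u n) < 1 / (n + 1) := hu2 n
            linarith
        _ ≤ 1 / (N + 1) + δ / 2 := by
            have : (1:ℝ) / (n + 1) ≤ 1 / (N + 1) := by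
              apply one_div_le_one_div_of_le (by positivity)
              have : (N : ℝ) ≤ n := by exact_mod_cast hnN.le
              linarith
            linarith
        _ < δ := by linarith
    exact ⟨y, hyA, s.iseqv.refl y⟩
end

section
/- Let X be a compact metric space and G a partition of X into compact sets whose non-degenerate elements {A_i}_{i∈ℕ} form a null-sequence of pairwise disjoint compact sets. Then the quotient space X/G is metrizable and compact. -/
theorem quotient_metrizable_compact_of_null_decomposition
    {X : Type*} [MetricSpace X] [CompactSpace X] (s : Setoid X)
    (hcompact : ∀ x : X, IsCompact {y : X | s.r x y})
    (A : ℕ → Set X)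
    (hA : ∀ i, ∃ x : X, A i = {y : X | s.r x y})
    (hnondeg : ∀ i, ¬ (A i).Subsingleton)
    (hdisj : Pairwise (Function.onFun Disjoint A))
    (hall : ∀ x : X, ¬ ({y : X | s.r x y}).Subsingleton → ∃ i, {y : X | s.r x y} = A i)
    (hnull : ∀ ε : ℝ, 0 < ε → {i : ℕ | ε ≤ Metric.diam (A i)}.Finite) :
    TopologicalSpace.MetrizableSpace (Quotient s) ∧ CompactSpace (Quotient s) := by
  classical
  set π : X → Quotient s := Quotient.mk s with hπ
  have hqm : Topology.IsQuotientMap π := isQuotientMap_quotient_mk'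
  have hsur : Function.Surjective π := Quotient.mk_surjective
  have hrefl : ∀ x : X, s.r x x := fun x => s.iseqv.refl x
  have hsymm : ∀ {x y : X}, s.r x y → s.r y x := fun h => s.iseqv.symm h
  have htrans : ∀ {x y z : X}, s.r x y → s.r y z → s.r x z := fun h h' => s.iseqv.trans h h'
  have hmk : ∀ x y : X, π x = π y ↔ s.r x y := fun x y =>
    ⟨fun h => Quotient.exact h, fun h => Quotient.sound h⟩
  have cls_eq : ∀ x y : X, s.r x y → {z | s.r x z} = {z | s.r y z} := by
    intro x y h; ext z
    exact ⟨fun hz => htrans (hsymm h) hz, fun hz => htrans h hz⟩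
  have hAne : ∀ i, (A i).Nonempty := fun i => by
    obtain ⟨x, hx⟩ := hA i; exact ⟨x, hx ▸ hrefl x⟩
  have hAcomp : ∀ i, IsCompact (A i) := fun i => by
    obtain ⟨x, hx⟩ := hA i; exact hx ▸ hcompact x
  have hAcls : ∀ i, ∀ x ∈ A i, A i = {z | s.r x z} := by
    intro i x hx
    obtain ⟨y, hy⟩ := hA i
    rw [hy] at hx ⊢
    exact cls_eq y x hx
  -- The quotient map is a closed map.
  have hclosed : IsClosedMap π := by
    intro C hC
    rw [← hqm.isClosed_preimage]
    have hpre : π ⁻¹' (π '' C) = {x | ∃ c ∈ C, s.r c x} := by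
      ext x
      simp only [Set.mem_preimage, Set.mem_image, Set.mem_setOf_eq]
      constructor
      · rintro ⟨c, hc, hcx⟩; exact ⟨c, hc, (hmk c x).1 hcx⟩
      · rintro ⟨c, hc, hcx⟩; exact ⟨c, hc, (hmk c x).2 hcx⟩
    rw [hpre]
    rcases C.eq_empty_or_nonempty with rfl | hCne
    · simp
    rw [← isOpen_compl_iff, Metric.isOpen_iff]
    intro x hx
    simp only [Set.mem_compl_iff, Set.mem_setOf_eq, not_exists, not_and] at hx
    have hxC : x ∉ C := fun h => hx x h (hrefl x)
    set δ := Metric.infDist x C with hδ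
    have hδpos : 0 < δ := (hC.notMem_iff_infDist_pos hCne).mp hxC
    set F : Set ℕ := {i | δ/2 ≤ Metric.diam (A i)} ∩ {i | (A i ∩ C).Nonempty} with hF
    have hFfin : F.Finite := (hnull (δ/2) (by positivity)).subset Set.inter_subset_left
    have hxA : ∀ i ∈ F, x ∉ A i := by
      rintro i ⟨-, c, hcA, hcC⟩ hxA
      rw [hAcls i c hcA] at hxA
      exact hx c hcC hxA
    set t : Finset ℕ := hFfin.toFinset with ht
    set E : Finset ℝ := insert (δ/2) (t.image fun i => Metric.infDist x (A i)) with hE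
    have hEne : E.Nonempty := ⟨δ/2, Finset.mem_insert_self _ _⟩
    set ε := E.min' hEne with hε
    have hεδ : ε ≤ δ/2 := Finset.min'_le _ _ (Finset.mem_insert_self _ _)
    have hεpos : 0 < ε := by
      rw [hε, Finset.lt_min'_iff]
      intro y hy
      rcases Finset.mem_insert.mp hy with rfl | hy
      · positivity
      · obtain ⟨i, hi, rfl⟩ := Finset.mem_image.mp hy
        have hiF : i ∈ F := hFfin.mem_toFinset.mp hi
        exact ((hAcomp i).isClosed.notMem_iff_infDist_pos (hAne i)).mp (hxA i hiF)
    refine ⟨ε, hεpos, ?_⟩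
    intro y hy
    rw [Metric.mem_ball] at hy
    simp only [Set.mem_compl_iff, Set.mem_setOf_eq, not_exists, not_and]
    intro c hcC hcy
    have h1 : δ ≤ dist x c := Metric.infDist_le_dist_of_mem hcC
    by_cases hsub : ({z | s.r c z} : Set X).Subsingleton
    · have hyc : y = c := hsub hcy (hrefl c)
      subst hyc
      have : dist y x < δ/2 := lt_of_lt_of_le hy hεδ
      rw [dist_comm] at h1
      linarith
    · obtain ⟨i, hi⟩ := hall c hsub
      have hcA : c ∈ A i := hi ▸ hrefl c
      have hyA : y ∈ A i := hi ▸ hcy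
      by_cases hd : Metric.diam (A i) < δ/2
      · have h2 : dist y c ≤ Metric.diam (A i) :=
          Metric.dist_le_diam_of_mem (hAcomp i).isBounded hyA hcA
        have h3 : dist x c ≤ dist x y + dist y c := dist_triangle x y c
        rw [dist_comm x y] at h3
        linarith
      · have hiF : i ∈ F := ⟨le_of_not_gt hd, c, hcA, hcC⟩
        have h2 : ε ≤ Metric.infDist x (A i) := by
          refine Finset.min'_le _ _ ?_
          exact Finset.mem_insert_of_mem (Finset.mem_image.mpr ⟨i, hFfin.mem_toFinset.mpr hiF, rfl⟩)
        have h3 : Metric.infDist x (A i) ≤ dist x y := Metric.infDist_le_dist_of_mem hyA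
        rw [dist_comm x y] at h3
        linarith
  -- Hausdorff
  have hT2 : T2Space (Quotient s) := by
    constructor
    intro a b hab
    obtain ⟨x, rfl⟩ := hsur a
    obtain ⟨y, rfl⟩ := hsur b
    have hdisjcls : Disjoint {z | s.r x z} {z | s.r y z} := by
      rw [Set.disjoint_left]
      intro z hz hz'
      exact hab ((hmk x y).2 (htrans hz (hsymm hz')))
    obtain ⟨U, V, hUo, hVo, hxU, hyV, hUV⟩ :=
      NormalSpace.normal _ _ (hcompact x).isClosed (hcompact y).isClosed hdisjcls
    refine ⟨(π '' Uᶜ)ᶜ, (π '' Vᶜ)ᶜ, (hclosed _ hUo.isClosed_compl).isOpen_compl,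
      (hclosed _ hVo.isClosed_compl).isOpen_compl, ?_, ?_, ?_⟩
    · rintro ⟨z, hz, hzx⟩
      exact hz (hxU (hsymm ((hmk z x).1 hzx)))
    · rintro ⟨z, hz, hzy⟩
      exact hz (hyV (hsymm ((hmk z y).1 hzy)))
    · rw [Set.disjoint_left]
      rintro q hq1 hq2
      obtain ⟨z, rfl⟩ := hsur q
      have hzU : z ∈ U := by
        by_contra h
        exact hq1 ⟨z, h, rfl⟩
      have hzV : z ∈ V := by
        by_contra h
        exact hq2 ⟨z, h, rfl⟩
      exact Set.disjoint_left.mp hUV hzU hzV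
  -- Second countable
  have hsc : SecondCountableTopology (Quotient s) := by
    set B := TopologicalSpace.countableBasis X with hBdef
    have hB := TopologicalSpace.isBasis_countableBasis X
    set 𝒰 : Set (Set X) := {U | ∃ T : Set (Set X), T.Finite ∧ T ⊆ B ∧ U = ⋃₀ T} with h𝒰
    have h𝒰c : 𝒰.Countable := by
      have h1 : {T : Set (Set X) | T.Finite ∧ T ⊆ B}.Countable :=
        Set.countable_setOf_finite_subset (TopologicalSpace.countable_countableBasis X)
      refine (h1.image fun T => ⋃₀ T).mono ?_
      rintro U ⟨T, hTf, hTB, rfl⟩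
      exact ⟨T, ⟨hTf, hTB⟩, rfl⟩
    refine TopologicalSpace.IsTopologicalBasis.secondCountableTopology
      (b := (fun U : Set X => (π '' Uᶜ)ᶜ) '' 𝒰) ?_ (h𝒰c.image _)
    apply TopologicalSpace.isTopologicalBasis_of_isOpen_of_nhds
    · rintro u ⟨U, ⟨T, hTf, hTB, rfl⟩, rfl⟩
      have hUo : IsOpen (⋃₀ T) := isOpen_sUnion fun v hv => hB.isOpen (hTB hv)
      exact (hclosed _ hUo.isClosed_compl).isOpen_compl
    · intro q W hqW hWo
      obtain ⟨x, rfl⟩ := hsur q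
      have hCc : IsCompact {z | s.r x z} := hcompact x
      have hsub : {z | s.r x z} ⊆ π ⁻¹' W := by
        intro z hz
        have : π z = π x := (hmk z x).2 (hsymm hz)
        show π z ∈ W
        rw [this]; exact hqW
      have hWp : IsOpen (π ⁻¹' W) := hWo.preimage hqm.continuous
      have hbs : ∀ z ∈ {z | s.r x z}, ∃ b ∈ B, z ∈ b ∧ b ⊆ π ⁻¹' W := fun z hz =>
        hB.exists_subset_of_mem_open (hsub hz) hWp
      choose! b hbB hzb hbsub using hbs
      obtain ⟨t, htcov⟩ := hCc.elim_finite_subcover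
        (fun z : {z : X | s.r x z} => b z) (fun z => hB.isOpen (hbB z z.2))
        (fun z hz => Set.mem_iUnion.mpr ⟨⟨z, hz⟩, hzb z hz⟩)
      set T : Set (Set X) := (fun z : {z : X | s.r x z} => b z) '' ↑t with hT
      have hTf : T.Finite := t.finite_toSet.image _
      have hTB : T ⊆ B := by
        rintro u ⟨z, -, rfl⟩
        exact hbB z z.2
      have hUeq : ⋃₀ T = ⋃ z ∈ t, b z := by
        rw [hT, Set.sUnion_image]
        simp
      have hUsub : ⋃₀ T ⊆ π ⁻¹' W := by
        rintro u ⟨v, ⟨z, -, rfl⟩, hu⟩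
        exact hbsub z z.2 hu
      have hclsU : {z | s.r x z} ⊆ ⋃₀ T := by
        rw [hUeq]; exact htcov
      refine ⟨(π '' (⋃₀ T)ᶜ)ᶜ, ⟨⋃₀ T, ⟨T, hTf, hTB, rfl⟩, rfl⟩, ?_, ?_⟩
      · rintro ⟨z, hz, hzx⟩
        exact hz (hclsU (hsymm ((hmk z x).1 hzx)))
      · intro p hp
        obtain ⟨z, rfl⟩ := hsur p
        have hzU : z ∈ ⋃₀ T := by
          by_contra h
          exact hp ⟨z, h, rfl⟩
        exact hUsub hzU
  haveI := hT2
  haveI := hsc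
  exact ⟨TopologicalSpace.metrizableSpace_of_t3_secondCountable _, inferInstance⟩
end

section
/- Let f : X → Y be a continuous surjection between compact metric spaces. Then f factors as f = l ∘ m where m : X → Z is a continuous monotone surjection (all fibers m⁻¹(z) are connected) and l : Z → Y is a continuous light map (all fibers l⁻¹(y) are totally disconnected), where Z is the quotient of X by the partition into connected components of the fibers of f. -/
open Set Topology

theorem monotone_light_factorization
    {X Y : Type*} [MetricSpace X] [CompactSpace X] [MetricSpace Y] [CompactSpace Y]
    (f : X → Y) (hf : Continuous f) (hsurj : Function.Surjective f)
    (s : Setoid X)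
    (hs : ∀ x y : X, s.r x y ↔ y ∈ connectedComponentIn (f ⁻¹' {f x}) x) :
    Continuous (Quotient.mk s) ∧ Function.Surjective (Quotient.mk s) ∧
    (∀ z : Quotient s, IsConnected ((Quotient.mk s) ⁻¹' {z})) ∧
    ∃ l : Quotient s → Y, Continuous l ∧ l ∘ (Quotient.mk s) = f ∧
      ∀ y : Y, IsTotallyDisconnected (l ⁻¹' {y}) := by
  -- basic facts about the setoid
  have hmk : ∀ a b : X, Quotient.mk s a = Quotient.mk s b ↔ s.r a b :=
    fun a b => ⟨Quotient.exact, Quotient.sound⟩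
  have hcongr : ∀ a b : X, s.r a b → f a = f b := by
    intro a b hab
    have := connectedComponentIn_subset (f ⁻¹' {f a}) a ((hs a b).1 hab)
    exact (mem_singleton_iff.1 this).symm
  refine ⟨continuous_coinduced_rng, fun z => Quotient.exists_rep z, ?_, ?_⟩
  · -- monotone: fibers of mk are connected
    intro z
    obtain ⟨x, rfl⟩ := Quotient.exists_rep z
    have hfiber : (Quotient.mk s) ⁻¹' {Quotient.mk s x}
        = connectedComponentIn (f ⁻¹' {f x}) x := by
      ext x'
      simp only [mem_preimage, mem_singleton_iff, hmk]
      constructor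
      · intro h; exact (hs x x').1 (s.symm h)
      · intro h; exact s.symm ((hs x x').2 h)
    rw [hfiber]
    exact isConnected_connectedComponentIn_iff.2 (mem_singleton _)
  · -- the light map l
    refine ⟨Quotient.lift f hcongr, hf.quotient_lift hcongr, rfl, ?_⟩
    intro y T hTsub hTpre z₁ hz₁ z₂ hz₂
    obtain ⟨x₁, rfl⟩ := Quotient.exists_rep z₁
    obtain ⟨x₂, rfl⟩ := Quotient.exists_rep z₂
    have hx₁F : x₁ ∈ f ⁻¹' {y} := hTsub hz₁
    have hx₂F : x₂ ∈ f ⁻¹' {y} := hTsub hz₂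
    set F : Set X := f ⁻¹' {y} with hFdef
    have hFclosed : IsClosed F := isClosed_singleton.preimage hf
    haveI : CompactSpace ↥F := isCompact_iff_compactSpace.mp hFclosed.isCompact
    -- suffices : x₂ in the component of x₁ in the fiber
    by_contra hne
    have hne' : (⟨x₂, hx₂F⟩ : ↥F) ∉ connectedComponent (⟨x₁, hx₁F⟩ : ↥F) := by
      intro hmem
      apply hne
      apply Quotient.sound
      show s.r x₁ x₂
      rw [hs x₁ x₂]
      have hx₁F' : x₁ ∈ f ⁻¹' {f x₁} := by
        simp only [mem_preimage, mem_singleton_iff]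
      rw [show f x₁ = y from hx₁F, connectedComponentIn_eq_image hx₁F]
      exact ⟨⟨x₂, hx₂F⟩, hmem, rfl⟩
    rw [connectedComponent_eq_iInter_isClopen, mem_iInter] at hne'
    push_neg at hne'
    obtain ⟨⟨Z, hZclopen, hx₁Z⟩, hx₂Z⟩ := hne'
    -- saturation: images of clopen pieces of the fiber are saturated
    have key : ∀ (W : Set ↥F), IsClopen W → ∀ a ∈ Subtype.val '' W, ∀ b, s.r a b →
        b ∈ Subtype.val '' W := by
      rintro W hW a ⟨a', ha'W, rfl⟩ b hab
      have hfa : f (a' : X) = y := a'.2.out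
      have h2 := (hs (a' : X) b).1 hab
      rw [hfa] at h2
      rw [connectedComponentIn_eq_image a'.2] at h2
      obtain ⟨b', hb', rfl⟩ := h2
      refine ⟨b', ?_, rfl⟩
      have : connectedComponent (⟨(a' : X), a'.2⟩ : ↥F) ⊆ W :=
        hW.connectedComponent_subset (by simpa using ha'W)
      exact this hb'
    have hclosed_im : ∀ (W : Set ↥F), IsClopen W → IsClosed (Subtype.val '' W) := by
      intro W hW
      exact ((hW.isClosed.isCompact).image continuous_subtype_val).isClosed
    have hqm : IsQuotientMap (Quotient.mk s) := isQuotientMap_quot_mk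
    have hsat : ∀ (W : Set ↥F), IsClopen W →
        (Quotient.mk s) ⁻¹' (Quotient.mk s '' (Subtype.val '' W)) = Subtype.val '' W := by
      intro W hW
      ext b
      simp only [mem_preimage, mem_image]
      constructor
      · rintro ⟨a, ha, hab⟩
        exact key W hW a ha b ((hmk a b).1 hab)
      · intro hb; exact ⟨b, hb, rfl⟩
    have hclosedQ : ∀ (W : Set ↥F), IsClopen W →
        IsClosed (Quotient.mk s '' (Subtype.val '' W)) := by
      intro W hW
      rw [← hqm.isClosed_preimage, hsat W hW]
      exact hclosed_im W hW
    set A := Quotient.mk s '' (Subtype.val '' Z) with hA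
    set B := Quotient.mk s '' (Subtype.val '' Zᶜ) with hB
    have hdisj : T ∩ (A ∩ B) = ∅ := by
      ext z
      simp only [mem_inter_iff, mem_empty_iff_false, iff_false, not_and]
      simp only [hA, hB, mem_image]
      intro _ hzA hzB
      obtain ⟨a, haZ, haz⟩ := hzA
      obtain ⟨b, hbZ, hbz⟩ := hzB
      have hba : s.r b a := (hmk b a).1 (hbz.trans haz.symm)
      have h3 := key Zᶜ hZclopen.compl b hbZ a hba
      obtain ⟨a₁, ha₁, hval₁⟩ := haZ
      obtain ⟨a₂, ha₂, hval₂⟩ := h3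
      have heq : a₁ = a₂ := Subtype.ext (hval₁.trans hval₂.symm)
      exact ha₂ (heq ▸ ha₁)
    have hcover : T ⊆ A ∪ B := by
      intro t ht
      obtain ⟨x, rfl⟩ := Quotient.exists_rep t
      have hxF : x ∈ F := hTsub ht
      by_cases hx : (⟨x, hxF⟩ : ↥F) ∈ Z
      · exact Or.inl ⟨x, ⟨⟨x, hxF⟩, hx, rfl⟩, rfl⟩
      · exact Or.inr ⟨x, ⟨⟨x, hxF⟩, hx, rfl⟩, rfl⟩
    have hz₁A : Quotient.mk s x₁ ∈ A := ⟨x₁, ⟨⟨x₁, hx₁F⟩, hx₁Z, rfl⟩, rfl⟩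
    have hz₂B : Quotient.mk s x₂ ∈ B := ⟨x₂, ⟨⟨x₂, hx₂F⟩, hx₂Z, rfl⟩, rfl⟩
    obtain ⟨w, hw⟩ := (isPreconnected_closed_iff.1 hTpre) A B
      (hclosedQ Z hZclopen) (hclosedQ Zᶜ hZclopen.compl) hcover
      ⟨_, hz₁, hz₁A⟩ ⟨_, hz₂, hz₂B⟩
    rw [hdisj] at hw
    exact hw
end
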